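/- Let n ≥ 5 be an integer, ε > 0, and let v : ℝ → ℝ be a four-times continuously differentiable positive solution of the Delaunay ODE with v(0) = ε, v′(0) = 0 and v‴(0) = 0. Then for every t ∈ ℝ, the Hamiltonian energy satisfies H(v)(t) = (1/2)·v″(0)² − (n²(n−4)²/32)·ε² + ((n−4)²(n²−4)/32)·ε^(2n/(n−4)). -/

import Mathlib

open Real

/-- The Delaunay ODE for an integer `n ≥ 5`. -/
def DelaunayODE (n : ℕ) (v : ℝ → ℝ) : Prop :=
  ∀ t : ℝ,
    iteratedDeriv 4 v t - (((n : ℝ) * ((n : ℝ) - 4) + 8) / 2) * iteratedDeriv 2 v t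
      + ((n : ℝ) ^ 2 * ((n : ℝ) - 4) ^ 2 / 16) * v t
      - ((n : ℝ) * ((n : ℝ) - 4) * ((n : ℝ) ^ 2 - 4) / 16)
          * (v t) ^ (((n : ℝ) + 4) / ((n : ℝ) - 4)) = 0

/-- The Hamiltonian energy of a function `v : ℝ → ℝ` for the Delaunay ODE. -/
noncomputable def hamiltonian (n : ℕ) (v : ℝ → ℝ) (t : ℝ) : ℝ :=
  -(deriv v t) * iteratedDeriv 3 v t + (1 / 2) * (iteratedDeriv 2 v t) ^ 2
    + (((n : ℝ) * ((n : ℝ) - 4) + 8) / 4) * (deriv v t) ^ 2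
    - ((n : ℝ) ^ 2 * ((n : ℝ) - 4) ^ 2 / 32) * (v t) ^ 2
    + (((n : ℝ) - 4) ^ 2 * ((n : ℝ) ^ 2 - 4) / 32)
        * (v t) ^ ((2 * (n : ℝ)) / ((n : ℝ) - 4))

/-!
The Hamiltonian is a first integral of the Delaunay ODE: for the general autonomous equation
`v⁗ - a v″ + b v - e q v ^ (q - 1) = 0`, the derivative of
`-v' v‴ + v″² / 2 + a v'² / 2 - b v² / 2 + e v ^ q` is `-v'` times the left-hand side. Hence `H(v)` is
constant, and its value at `0` is read off from `v(0) = ε`, `v'(0) = v‴(0) = 0`.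
-/

theorem ContDiff.hasDerivAt_iteratedDeriv {f : ℝ → ℝ} {N : ℕ} (hf : ContDiff ℝ N f)
    {k : ℕ} (hk : k < N) (t : ℝ) :
    HasDerivAt (iteratedDeriv k f) (iteratedDeriv (k + 1) f t) t := by
  rw [iteratedDeriv_succ]
  exact (hf.differentiable_iteratedDeriv k (by exact_mod_cast hk) t).hasDerivAt

def FourthOrderODE (a b e q : ℝ) (v : ℝ → ℝ) : Prop :=
  ∀ t, iteratedDeriv 4 v t - a * iteratedDeriv 2 v t + b * v t - e * q * (v t) ^ (q - 1) = 0

noncomputable def fourthOrderEnergy (a b e q : ℝ) (v : ℝ → ℝ) (t : ℝ) : ℝ :=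
  -(deriv v t) * iteratedDeriv 3 v t + (1 / 2) * (iteratedDeriv 2 v t) ^ 2
    + (a / 2) * (deriv v t) ^ 2 - (b / 2) * (v t) ^ 2 + e * (v t) ^ q

theorem hasDerivAt_fourthOrderEnergy (a b e q : ℝ) {v : ℝ → ℝ} (hv : ContDiff ℝ 4 v)
    {t : ℝ} (hvt : v t ≠ 0) :
    HasDerivAt (fourthOrderEnergy a b e q v)
      (-(deriv v t) * (iteratedDeriv 4 v t - a * iteratedDeriv 2 v t + b * v t
        - e * q * (v t) ^ (q - 1))) t := by
  have hv0 : HasDerivAt v (deriv v t) t := (hv.differentiable (by norm_num) t).hasDerivAt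
  have hv1 : HasDerivAt (deriv v) (iteratedDeriv 2 v t) t := by
    simpa only [iteratedDeriv_one] using hv.hasDerivAt_iteratedDeriv (k := 1) (by norm_num) t
  have hv2 := hv.hasDerivAt_iteratedDeriv (k := 2) (by norm_num) t
  have hv3 := hv.hasDerivAt_iteratedDeriv (k := 3) (by norm_num) t
  have hsum := (((((hv1.neg.mul hv3).add ((hv2.pow 2).const_mul (1 / 2 : ℝ))).add
    ((hv1.pow 2).const_mul (a / 2))).sub ((hv0.pow 2).const_mul (b / 2))).add
    ((hv0.rpow_const (p := q) (Or.inl hvt)).const_mul e))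
  refine hsum.congr_deriv ?_
  simp only [Nat.reduceAdd, Nat.cast_ofNat, Pi.neg_apply]
  ring

theorem FourthOrderODE.fourthOrderEnergy_eq {a b e q : ℝ} {v : ℝ → ℝ}
    (hode : FourthOrderODE a b e q v) (hv : ContDiff ℝ 4 v) (hne : ∀ t, v t ≠ 0) (s t : ℝ) :
    fourthOrderEnergy a b e q v s = fourthOrderEnergy a b e q v t := by
  have hderiv (r : ℝ) : HasDerivAt (fourthOrderEnergy a b e q v) 0 r := by
    simpa only [hode r, mul_zero] using hasDerivAt_fourthOrderEnergy a b e q hv (hne r)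
  exact is_const_of_deriv_eq_zero (fun r => (hderiv r).differentiableAt)
    (fun r => (hderiv r).deriv) s t

theorem hamiltonian_eq_fourthOrderEnergy (n : ℕ) (v : ℝ → ℝ) :
    hamiltonian n v = fourthOrderEnergy (((n : ℝ) * (n - 4) + 8) / 2)
      ((n : ℝ) ^ 2 * (n - 4) ^ 2 / 16) (((n : ℝ) - 4) ^ 2 * ((n : ℝ) ^ 2 - 4) / 32)
      (2 * (n : ℝ) / (n - 4)) v := by
  ext t
  simp only [hamiltonian, fourthOrderEnergy]
  ring

theorem DelaunayODE.fourthOrderODE {n : ℕ} (hn : n ≠ 4) {v : ℝ → ℝ} (hode : DelaunayODE n v) :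
    FourthOrderODE (((n : ℝ) * (n - 4) + 8) / 2) ((n : ℝ) ^ 2 * (n - 4) ^ 2 / 16)
      (((n : ℝ) - 4) ^ 2 * ((n : ℝ) ^ 2 - 4) / 32) (2 * (n : ℝ) / (n - 4)) v := by
  have hn4 : (n : ℝ) - 4 ≠ 0 := sub_ne_zero.mpr (by exact_mod_cast hn)
  have hexp : 2 * (n : ℝ) / (n - 4) - 1 = ((n : ℝ) + 4) / (n - 4) := by
    field_simp
    ring
  have hcoeff : ((n : ℝ) - 4) ^ 2 * ((n : ℝ) ^ 2 - 4) / 32 * (2 * (n : ℝ) / (n - 4))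
      = (n : ℝ) * (n - 4) * ((n : ℝ) ^ 2 - 4) / 16 := by
    field_simp
    ring
  intro t
  rw [hexp, hcoeff]
  exact hode t

theorem hamiltonian_value_general (n : ℕ) (hn : 5 ≤ n) (ε : ℝ)
    (v : ℝ → ℝ) (hv : ContDiff ℝ 4 v) (hpos : ∀ t : ℝ, 0 < v t)
    (hode : DelaunayODE n v)
    (h0 : v 0 = ε) (h1 : deriv v 0 = 0) (h3 : iteratedDeriv 3 v 0 = 0) (t : ℝ) :
    hamiltonian n v t =
      (1 / 2) * (iteratedDeriv 2 v 0) ^ 2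
        - ((n : ℝ) ^ 2 * ((n : ℝ) - 4) ^ 2 / 32) * ε ^ 2
        + (((n : ℝ) - 4) ^ 2 * ((n : ℝ) ^ 2 - 4) / 32)
            * ε ^ ((2 * (n : ℝ)) / ((n : ℝ) - 4)) := by
  have hconst : hamiltonian n v t = hamiltonian n v 0 := by
    rw [hamiltonian_eq_fourthOrderEnergy]
    exact (hode.fourthOrderODE (by omega)).fourthOrderEnergy_eq hv (fun s => (hpos s).ne') t 0
  rw [hconst, hamiltonian, h0, h1, h3]
  ring

theorem hamiltonian_value (n : ℕ) (hn : 5 ≤ n) (ε : ℝ) (hε : 0 < ε)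
    (v : ℝ → ℝ) (hv : ContDiff ℝ 4 v) (hpos : ∀ t : ℝ, 0 < v t)
    (hode : DelaunayODE n v)
    (h0 : v 0 = ε) (h1 : deriv v 0 = 0) (h3 : iteratedDeriv 3 v 0 = 0) (t : ℝ) :
    hamiltonian n v t =
      (1 / 2) * (iteratedDeriv 2 v 0) ^ 2
        - ((n : ℝ) ^ 2 * ((n : ℝ) - 4) ^ 2 / 32) * ε ^ 2
        + (((n : ℝ) - 4) ^ 2 * ((n : ℝ) ^ 2 - 4) / 32)
            * ε ^ ((2 * (n : ℝ)) / ((n : ℝ) - 4)) :=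
  hamiltonian_value_general n hn ε v hv hpos hode h0 h1 h3 t
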